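/- Let H ∈ ℝ^{3×3} and let p, q ∈ ℝ² with w_H(p) > 0 and w_H(q) > 0. Then the homography f_H maps the closed segment [p, q] onto the closed segment [f_H(p), f_H(q)]: f_H '' (segment ℝ p q) = segment ℝ (f_H p) (f_H q). -/

import Mathlib

/-- The cross value of three points in the plane: the z-coordinate of the
cross product `(b - a) × (c - b)`. -/
noncomputable def cross (a b c : ℝ × ℝ) : ℝ :=
  (b.1 - a.1) * (c.2 - b.2) - (b.2 - a.2) * (c.1 - b.1)

/-- The lift of a planar point `(x, y)` to `(x, y, 1) ∈ ℝ³`. -/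
noncomputable def liftPt (p : ℝ × ℝ) : Fin 3 → ℝ := ![p.1, p.2, 1]

/-- The homography denominator: the third coordinate of `H ℓ(p)`. -/
noncomputable def wH (H : Matrix (Fin 3) (Fin 3) ℝ) (p : ℝ × ℝ) : ℝ :=
  H.mulVec (liftPt p) 2

/-- The planar homography induced by the matrix `H`. -/
noncomputable def fH (H : Matrix (Fin 3) (Fin 3) ℝ) (p : ℝ × ℝ) : ℝ × ℝ :=
  (H.mulVec (liftPt p) 0 / wH H p, H.mulVec (liftPt p) 1 / wH H p)

/-! Along the segment, `t ↦ wH H (lineMap p q t)` is affine, so `fH H` sends `lineMap p q t` to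
`lineMap (fH H p) (fH H q) (t * wH H q / wH H (lineMap p q t))`. Since both endpoint weights are
positive, this reparametrization is a continuous self-map of `[0, 1]` fixing `0` and `1`, hence onto
by the intermediate value theorem. -/

open AffineMap Set

section Perspective

variable {u v : ℝ}

lemma lineMap_pos_of_mem_Icc (hu : 0 < u) (hv : 0 < v) {t : ℝ} (ht : t ∈ Icc (0 : ℝ) 1) :
    0 < lineMap u v t := by
  rw [lineMap_apply_ring]
  rcases ht with ⟨ht0, ht1⟩
  rcases ht0.lt_or_eq with h | rfl
  · nlinarith
  · simpa using hu

lemma image_mul_div_lineMap_Icc (hu : 0 < u) (hv : 0 < v) :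
    (fun t => t * v / lineMap u v t) '' Icc 0 1 = Icc 0 1 := by
  refine Subset.antisymm ?_ ?_
  · rintro _ ⟨t, ht, rfl⟩
    have hD := lineMap_pos_of_mem_Icc hu hv ht
    have hle : t * v ≤ lineMap u v t := by
      rw [lineMap_apply_ring]; nlinarith [ht.2]
    exact ⟨div_nonneg (mul_nonneg ht.1 hv.le) hD.le, (div_le_one hD).2 hle⟩
  · have hcont : ContinuousOn (fun t => t * v / lineMap u v t) (Icc 0 1) :=
      ContinuousOn.div (by fun_prop) (by fun_prop) fun t ht => (lineMap_pos_of_mem_Icc hu hv ht).ne'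
    simpa [hv.ne'] using intermediate_value_Icc zero_le_one hcont

end Perspective

lemma liftPt_lineMap (p q : ℝ × ℝ) (t : ℝ) :
    liftPt (lineMap p q t) = lineMap (liftPt p) (liftPt q) t := by
  ext i
  fin_cases i <;> simp [liftPt, lineMap_apply_module]

lemma mulVec_liftPt_lineMap (H : Matrix (Fin 3) (Fin 3) ℝ) (p q : ℝ × ℝ) (t : ℝ) :
    H.mulVec (liftPt (lineMap p q t)) = lineMap (H.mulVec (liftPt p)) (H.mulVec (liftPt q)) t := by
  rw [liftPt_lineMap]
  exact (Matrix.mulVecLin H).toAffineMap.apply_lineMap _ _ t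

lemma wH_lineMap (H : Matrix (Fin 3) (Fin 3) ℝ) (p q : ℝ × ℝ) (t : ℝ) :
    wH H (lineMap p q t) = lineMap (wH H p) (wH H q) t := by
  simp only [wH, mulVec_liftPt_lineMap]
  simp [lineMap_apply_module]

lemma fH_lineMap (H : Matrix (Fin 3) (Fin 3) ℝ) {p q : ℝ × ℝ} (hp : wH H p ≠ 0) (hq : wH H q ≠ 0)
    {t : ℝ} (ht : wH H (lineMap p q t) ≠ 0) :
    fH H (lineMap p q t) = lineMap (fH H p) (fH H q) (t * wH H q / wH H (lineMap p q t)) := by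
  rw [wH_lineMap, lineMap_apply_ring] at ht
  rw [wH_lineMap]
  simp only [fH, mulVec_liftPt_lineMap, wH_lineMap]
  ext <;> simp only [lineMap_apply_module, Prod.smul_fst, Prod.smul_snd,
    Prod.fst_add, Prod.snd_add, Pi.add_apply, Pi.smul_apply, smul_eq_mul] <;> field_simp <;> ring

theorem fH_image_segment (H : Matrix (Fin 3) (Fin 3) ℝ) (p q : ℝ × ℝ)
    (hp : 0 < wH H p) (hq : 0 < wH H q) :
    fH H '' segment ℝ p q = segment ℝ (fH H p) (fH H q) := by
  have hw {t : ℝ} (ht : t ∈ Icc (0 : ℝ) 1) : 0 < wH H (lineMap p q t) :=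
    wH_lineMap H p q t ▸ lineMap_pos_of_mem_Icc hp hq ht
  rw [segment_eq_image_lineMap, segment_eq_image_lineMap, image_image]
  conv_rhs => rw [← image_mul_div_lineMap_Icc hp hq, image_image]
  refine image_congr fun t ht => ?_
  rw [fH_lineMap H hp.ne' hq.ne' (hw ht).ne', wH_lineMap]
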